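/- arXiv:1712.04425 — 5 statements merged into one kernel-verified Lean document; each statement's English description precedes it below -/
import Mathlib

section
/- Let {a_n} be a sequence of positive real numbers such that the logarithmic differences Δ log a_n = log a_{n+1} - log a_n satisfy Δ log a_n → ∞ as n → ∞ and Δ log a_{n+1} = Δ log a_n + O(1/n) as n → ∞. Then for every integer k ≥ 2, the sequence {a_n} is not locally Benford distributed of order k. -/
open Filter

/-- `x` has leading digit `d` in base 10: `d·10^k ≤ x < (d+1)·10^k` for some integer `k`. -/
def HasLeadingDigit (x : ℝ) (d : ℕ) : Prop :=
  ∃ k : ℤ, (d : ℝ) * 10 ^ k ≤ x ∧ x < ((d : ℝ) + 1) * 10 ^ k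

/-- The Benford frequency `P(d) = log₁₀ (1 + 1/d)` of digit `d`. -/
noncomputable def benfordP (d : ℕ) : ℝ := Real.logb 10 (1 + 1 / (d : ℝ))

/-- A sequence is Benford distributed if for each digit `d ∈ {1,…,9}` the density of
indices `n` with `D(a_n) = d` equals `P(d)`. -/
def BenfordDistributed (a : ℕ → ℝ) : Prop :=
  ∀ d : ℕ, 1 ≤ d → d ≤ 9 →
    Tendsto
      (fun N : ℕ =>
        (Nat.card {n : ℕ | 1 ≤ n ∧ n ≤ N ∧ HasLeadingDigit (a n) d} : ℝ) / N)
      atTop (nhds (benfordP d))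

/-- A sequence is locally Benford distributed of order `k` if every `k`-tuple of digits
in `{1,…,9}` occurs among leading digits of `k` consecutive terms with density
`P(d₀)⋯P(d_{k-1})`. -/
def LocallyBenfordDistributed (a : ℕ → ℝ) (k : ℕ) : Prop :=
  ∀ d : Fin k → ℕ, (∀ i, 1 ≤ d i ∧ d i ≤ 9) →
    Tendsto
      (fun N : ℕ =>
        (Nat.card {n : ℕ | 1 ≤ n ∧ n ≤ N ∧
            ∀ i : Fin k, HasLeadingDigit (a (n + (i : ℕ))) (d i)} : ℝ) / N)
      atTop (nhds (∏ i : Fin k, benfordP (d i)))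

/-- `waitingTime a d i` is the waiting time `w_i(d) = n_{i+1}^{(d)} - n_i^{(d)}`, where
`n_1^{(d)} < n_2^{(d)} < ⋯` enumerates `{n ∈ ℕ, n ≥ 1 : D(a_n) = d}`
(the `j`-th element of this set, 1-indexed, being `Nat.nth · (j-1)`). -/
noncomputable def waitingTime (a : ℕ → ℝ) (d : ℕ) (i : ℕ) : ℕ :=
  Nat.nth (fun n => 1 ≤ n ∧ HasLeadingDigit (a n) d) i -
    Nat.nth (fun n => 1 ≤ n ∧ HasLeadingDigit (a n) d) (i - 1)

/-- A sequence has Benford distributed waiting times if for each digit `d ∈ {1,…,9}`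
the waiting times between occurrences of leading digit `d` take value `k` with density
`P(d)(1-P(d))^{k-1}`. -/
def BenfordWaitingTimes (a : ℕ → ℝ) : Prop :=
  ∀ d : ℕ, 1 ≤ d → d ≤ 9 → ∀ k : ℕ, 1 ≤ k →
    Tendsto
      (fun N : ℕ =>
        (Nat.card {i : ℕ | 1 ≤ i ∧ i ≤ N ∧ waitingTime a d i = k} : ℝ) / N)
      atTop (nhds (benfordP d * (1 - benfordP d) ^ (k - 1)))

/-- A sequence `u` of real numbers is uniformly distributed modulo 1. -/
def UniformlyDistributedMod1 (u : ℕ → ℝ) : Prop :=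
  ∀ t : ℝ, 0 ≤ t → t ≤ 1 →
    Tendsto
      (fun N : ℕ =>
        (Nat.card {n : ℕ | 1 ≤ n ∧ n ≤ N ∧ Int.fract (u n) ≤ t} : ℝ) / N)
      atTop (nhds t)

/-- `nthPrime n` is the `n`-th prime (1-indexed): `nthPrime 1 = 2`, `nthPrime 2 = 3`, … -/
noncomputable def nthPrime (n : ℕ) : ℕ := Nat.nth Nat.Prime (n - 1)

/-! Write `Δₙ = log₁₀ aₙ₊₁ - log₁₀ aₙ`. Since `Δₙ₊₁ - Δₙ = O(1/n)`, `Δₙ` varies by less than a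
fixed `η > 0` on every window `[N, (1 + ε) N]`. A term with leading digit 1 has `log₁₀ aₙ mod 1`
in an arc of length `log₁₀ 2 < 1/3`, so inside the window `log₁₀ aₙ₊₁ mod 1` avoids a whole
digit cell `f` chosen from `Δ_N` alone. By pigeonhole one `f` works for infinitely many windows,
so the digit pattern `(1, f, 1, …, 1)` has gaps `(N, (1 + ε) N]` for arbitrarily large `N`, which
is impossible for a pattern of positive density `P(1)^{k-1} P(f)`. -/

open Real Topology

lemma logb_ten_two_lt_one_third : logb 10 2 < 1 / 3 := by
  have h8 : log 8 < log 10 := log_lt_log (by norm_num) (by norm_num)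
  have h83 : log 8 = 3 * log 2 := by
    rw [show (8 : ℝ) = 2 ^ 3 by norm_num, log_pow]; norm_num
  rw [logb, div_lt_iff₀ (log_pos (by norm_num))]
  linarith

lemma logb_add_one_le_add_logb_two {b x : ℝ} (hb : 1 < b) (hx : 1 ≤ x) :
    logb b (x + 1) ≤ logb b x + logb b 2 := by
  rw [add_comm (logb b x), ← logb_mul (by norm_num) (by positivity)]
  exact logb_le_logb_of_le hb (by positivity) (by linarith)

lemma HasLeadingDigit.exists_logb {x : ℝ} {d : ℕ} (hd : 1 ≤ d) (h : HasLeadingDigit x d) :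
    ∃ k : ℤ, k + logb 10 d ≤ logb 10 x ∧ logb 10 x < k + logb 10 ((d : ℝ) + 1) := by
  obtain ⟨k, hlo, hhi⟩ := h
  have hd : (0 : ℝ) < d := by exact_mod_cast hd
  have hlogb_mul : ∀ y : ℝ, 0 < y → logb 10 (y * 10 ^ k) = k + logb 10 y := fun y hy => by
    rw [logb_mul hy.ne' (by positivity), ← rpow_intCast, logb_rpow (by norm_num) (by norm_num),
      add_comm]
  refine ⟨k, ?_, ?_⟩
  · rw [← hlogb_mul d hd]
    exact logb_le_logb_of_le (by norm_num) (by positivity) hlo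
  · rw [← hlogb_mul _ (by positivity)]
    exact logb_lt_logb (by norm_num) (lt_of_lt_of_le (by positivity) hlo) hhi

lemma exists_digit_cell_subset (u : ℝ) :
    ∃ q : ℤ, ∃ f ∈ Finset.Icc (1 : ℕ) 9,
      u ≤ q + logb 10 f ∧ q + logb 10 ((f : ℝ) + 1) ≤ u + 2 * logb 10 2 := by
  have hc : 0 < logb 10 2 := logb_pos (by norm_num) (by norm_num)
  set v := Int.fract u
  have hv0 : 0 ≤ v := Int.fract_nonneg u
  have hv1 : v < 1 := Int.fract_lt_one u
  have hex : ∃ d : ℕ, 1 ≤ d ∧ v ≤ logb 10 d := ⟨10, by norm_num, by norm_num; linarith⟩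
  set d := Nat.find hex
  obtain ⟨hd1, hvd⟩ : 1 ≤ d ∧ v ≤ logb 10 d := Nat.find_spec hex
  have hd10 : d ≤ 10 := Nat.find_min' hex ⟨by norm_num, by norm_num; linarith⟩
  have hdv : logb 10 d ≤ v + logb 10 2 := by
    rcases hd1.eq_or_lt with h | h
    · rw [← h]; norm_num; linarith
    · have hprev : ¬(1 ≤ d - 1 ∧ v ≤ logb 10 (d - 1 : ℕ)) := Nat.find_min hex (by omega)
      have hstep := logb_add_one_le_add_logb_two (b := 10) (x := (d - 1 : ℕ)) (by norm_num)
        (by norm_cast; omega)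
      rw [show ((d - 1 : ℕ) : ℝ) + 1 = d by exact_mod_cast Nat.sub_add_cancel hd1] at hstep
      have : logb 10 (d - 1 : ℕ) < v := not_le.mp fun h' => hprev ⟨by omega, h'⟩
      linarith
  have hu : u = ⌊u⌋ + v := (Int.floor_add_fract u).symm
  rcases hd10.eq_or_lt with h | h
  · refine ⟨⌊u⌋ + 1, 1, by norm_num, ?_, ?_⟩
    · push_cast; norm_num; linarith
    · rw [h] at hdv; push_cast; norm_num at hdv ⊢; linarith
  · refine ⟨⌊u⌋, d, Finset.mem_Icc.mpr ⟨hd1, by omega⟩, by linarith, ?_⟩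
    have := logb_add_one_le_add_logb_two (b := 10) (x := d) (by norm_num) (by exact_mod_cast hd1)
    linarith

/-- After a term with leading digit 1 and a log-step within `η` of `β`, the logarithm of the next
term lies in an arc of length `log₁₀ 2 + 2η`; the choice `η = (1 - 3 log₁₀ 2) / 2` leaves the
complementary arc long enough (`2 log₁₀ 2`) to contain a whole digit cell. -/
lemma exists_digit_not_after_one (β : ℝ) :
    ∃ f ∈ Finset.Icc (1 : ℕ) 9, ∀ x y : ℝ,
      |logb 10 y - logb 10 x - β| ≤ (1 - 3 * logb 10 2) / 2 →
      HasLeadingDigit x 1 → ¬ HasLeadingDigit y f := by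
  obtain ⟨q, f, hf, hqf, hqf1⟩ :=
    exists_digit_cell_subset (β + logb 10 2 + (1 - 3 * logb 10 2) / 2)
  refine ⟨f, hf, fun x y hxy hx hy => ?_⟩
  obtain ⟨k, hxlo, hxhi⟩ := hx.exists_logb le_rfl
  obtain ⟨p, hylo, hyhi⟩ := hy.exists_logb (Finset.mem_Icc.mp hf).1
  norm_num at hxlo hxhi
  obtain ⟨hxy₁, hxy₂⟩ := abs_le.mp hxy
  rcases le_or_gt q (p - k) with hpq | hpq
  · have : (q : ℝ) ≤ p - k := by exact_mod_cast hpq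
    linarith
  · have : (p : ℝ) - k ≤ q - 1 := by
      have : p - k ≤ q - 1 := by omega
      exact_mod_cast this
    linarith

lemma abs_sub_le_of_abs_sub_succ_le {g : ℕ → ℝ} {C : ℝ} (hC : 0 ≤ C)
    (hg : ∀ n : ℕ, 1 ≤ n → |g (n + 1) - g n| ≤ C / n) {m n : ℕ} (hm : 1 ≤ m) (hmn : m ≤ n) :
    |g n - g m| ≤ (n - m) * C / m := by
  induction n, hmn using Nat.le_induction with
  | base => simp
  | succ n hmn ih =>
    have hmpos : (0 : ℝ) < m := by exact_mod_cast hm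
    have hstep : C / n ≤ C / m :=
      div_le_div_of_nonneg_left hC hmpos (by exact_mod_cast hmn)
    calc |g (n + 1) - g m| ≤ |g (n + 1) - g n| + |g n - g m| := abs_sub_le _ _ _
      _ ≤ C / m + (n - m) * C / m := add_le_add ((hg n (hm.trans hmn)).trans hstep) ih
      _ = ((n + 1 : ℕ) - m) * C / m := by push_cast; ring

lemma abs_sub_le_of_le_add_floor {g : ℕ → ℝ} {C ε : ℝ} (hC : 0 ≤ C) (hε : 0 ≤ ε)
    (hg : ∀ n : ℕ, 1 ≤ n → |g (n + 1) - g n| ≤ C / n) {N n : ℕ} (hN : 1 ≤ N) (hNn : N ≤ n)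
    (hn : n ≤ N + ⌊ε * N⌋₊) :
    |g n - g N| ≤ ε * C := by
  have hNpos : (0 : ℝ) < N := by exact_mod_cast hN
  have hlen : (n : ℝ) - N ≤ ε * N := by
    have : (n : ℝ) ≤ N + ⌊ε * N⌋₊ := by exact_mod_cast hn
    linarith [Nat.floor_le (mul_nonneg hε hNpos.le)]
  calc |g n - g N| ≤ (n - N) * C / N := abs_sub_le_of_abs_sub_succ_le hC hg hN hNn
    _ ≤ ε * N * C / N := by gcongr
    _ = ε * C := by field_simp

lemma setOf_le_eq_of_forall_not {P : ℕ → Prop} {N N' : ℕ}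
    (hgap : ∀ n, N < n → n ≤ N' → ¬ P n) (hNN' : N ≤ N') :
    {n : ℕ | 1 ≤ n ∧ n ≤ N' ∧ P n} = {n : ℕ | 1 ≤ n ∧ n ≤ N ∧ P n} := by
  ext n
  refine ⟨fun ⟨h1, hn, hP⟩ => ⟨h1, not_lt.mp fun h => hgap n h hn hP, hP⟩,
    fun ⟨h1, hn, hP⟩ => ⟨h1, hn.trans hNN', hP⟩⟩

/-- Across a missed window the counting function stays constant while `N` grows by the factor
`1 + ε`, which forces the density to be `0`. -/
lemma not_frequently_forall_not_of_tendsto_density {P : ℕ → Prop} {ρ ε : ℝ} (hρ : 0 < ρ)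
    (hε : 0 < ε)
    (hP : Tendsto (fun N : ℕ => (Nat.card {n : ℕ | 1 ≤ n ∧ n ≤ N ∧ P n} : ℝ) / N) atTop (𝓝 ρ)) :
    ¬ ∃ᶠ N : ℕ in atTop, ∀ n : ℕ, N < n → n ≤ N + ⌊ε * N⌋₊ → ¬ P n := by
  intro hfreq
  set count : ℕ → ℝ := fun N => Nat.card {n : ℕ | 1 ≤ n ∧ n ≤ N ∧ P n}
  set l := atTop ⊓ 𝓟 {N : ℕ | ∀ n, N < n → n ≤ N + ⌊ε * N⌋₊ → ¬ P n}
  have : l.NeBot := frequently_iff_neBot.mp hfreq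
  have hl : l ≤ atTop := inf_le_left
  have hshift : Tendsto (fun N : ℕ => N + ⌊ε * N⌋₊) l atTop :=
    tendsto_atTop_mono (fun N => Nat.le_add_right _ _) (tendsto_id.mono_left hl)
  have hratio : Tendsto (fun N : ℕ => ((N + ⌊ε * N⌋₊ : ℕ) : ℝ) / N) l (𝓝 (1 + ε)) := by
    have hfloor := ((tendsto_nat_floor_mul_div_atTop hε.le).comp
      tendsto_natCast_atTop_atTop).mono_left hl
    refine (tendsto_const_nhds.add hfloor).congr' ?_
    filter_upwards [hl (eventually_ge_atTop 1)] with N hN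
    have : (N : ℝ) ≠ 0 := by exact_mod_cast (by omega : N ≠ 0)
    simp only [Function.comp, Nat.cast_add]
    field_simp
  have hlim : Tendsto (fun N : ℕ => count N / N) l (𝓝 (ρ * (1 + ε))) := by
    refine ((hP.comp hshift).mul hratio).congr' ?_
    filter_upwards [hl (eventually_ge_atTop 1), inf_le_right (a := atTop) (mem_principal_self _)]
      with N hN hgap
    have hshift_ne : ((N + ⌊ε * N⌋₊ : ℕ) : ℝ) ≠ 0 := by exact_mod_cast (by omega : N + _ ≠ 0)
    simp only [Function.comp, count, setOf_le_eq_of_forall_not hgap (Nat.le_add_right _ _)]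
    field_simp
  have := tendsto_nhds_unique hlim (hP.mono_left hl)
  nlinarith

lemma benfordP_pos {d : ℕ} (hd : 1 ≤ d) : 0 < benfordP d :=
  logb_pos (by norm_num) (lt_add_of_pos_right 1 (by positivity))

lemma exists_digit_not_after_one_on_window {a : ℕ → ℝ} {C ε : ℝ} (hC : 0 < C) (hε : 0 ≤ ε)
    (hεC : ε * C ≤ (1 - 3 * logb 10 2) / 2 * log 10)
    (hreg : ∀ n : ℕ, 1 ≤ n →
      |(log (a (n + 2)) - log (a (n + 1))) - (log (a (n + 1)) - log (a n))| ≤ C / n)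
    {N : ℕ} (hN : 1 ≤ N) :
    ∃ f ∈ Finset.Icc (1 : ℕ) 9, ∀ n : ℕ, N < n → n ≤ N + ⌊ε * N⌋₊ →
      ¬ (HasLeadingDigit (a n) 1 ∧ HasLeadingDigit (a (n + 1)) f) := by
  set Δ : ℕ → ℝ := fun n => log (a (n + 1)) - log (a n)
  have hlog10 : 0 < log 10 := log_pos (by norm_num)
  obtain ⟨f, hf, hforbid⟩ := exists_digit_not_after_one (Δ N / log 10)
  refine ⟨f, hf, fun n hNn hn ⟨h1, hf'⟩ => hforbid (a n) (a (n + 1)) ?_ h1 hf'⟩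
  have hwin := (abs_sub_le_of_le_add_floor (g := Δ) hC.le hε hreg hN hNn.le hn).trans hεC
  rw [show logb 10 (a (n + 1)) - logb 10 (a n) - Δ N / log 10 = (Δ n - Δ N) / log 10 by
    simp only [logb, Δ]; ring, abs_div, abs_of_pos hlog10, div_le_iff₀ hlog10]
  exact hwin

theorem not_locallyBenford_of_smooth_general (a : ℕ → ℝ)
    (hreg : ∃ C : ℝ, 0 < C ∧ ∀ n : ℕ, 1 ≤ n →
      |(Real.log (a (n + 2)) - Real.log (a (n + 1))) -
        (Real.log (a (n + 1)) - Real.log (a n))| ≤ C / n) :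
    ∀ k : ℕ, 2 ≤ k → ¬ LocallyBenfordDistributed a k := by
  intro k hk hLB
  obtain ⟨C, hC, hreg⟩ := hreg
  set ε := (1 - 3 * logb 10 2) / 2 * log 10 / C
  have hε : 0 < ε := div_pos (mul_pos (by linarith [logb_ten_two_lt_one_third])
    (log_pos (by norm_num))) hC
  have hgap N (hN : 1 ≤ N) := exists_digit_not_after_one_on_window hC hε.le
    (div_mul_cancel₀ _ hC.ne').le hreg hN
  obtain ⟨f, hf, hfreq⟩ :=
    (Finset.Icc 1 9).frequently_exists.mp ((eventually_ge_atTop 1).frequently.mono hgap)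
  obtain ⟨hf1, hf9⟩ := Finset.mem_Icc.mp hf
  set d : Fin k → ℕ := fun i => if (i : ℕ) = 1 then f else 1
  have hd : ∀ i, 1 ≤ d i ∧ d i ≤ 9 := fun i => by simp only [d]; split_ifs <;> omega
  refine not_frequently_forall_not_of_tendsto_density
    (Finset.prod_pos fun i _ => benfordP_pos (hd i).1) hε (hLB d hd)
    (hfreq.mono fun N hN n hNn hn hdigits => hN n hNn hn ⟨?_, ?_⟩)
  · simpa [d] using hdigits ⟨0, by omega⟩
  · simpa [d] using hdigits ⟨1, hk⟩

/-- If `Δ log a_n → ∞` and `Δ log a_{n+1} = Δ log a_n + O(1/n)`, then `{a_n}` is not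
locally Benford distributed of any order `k ≥ 2`. -/
theorem not_locallyBenford_of_smooth (a : ℕ → ℝ)
    (hpos : ∀ n : ℕ, 1 ≤ n → 0 < a n)
    (hgrow : Tendsto (fun n : ℕ => Real.log (a (n + 1)) - Real.log (a n)) atTop atTop)
    (hreg : ∃ C : ℝ, 0 < C ∧ ∀ n : ℕ, 1 ≤ n →
      |(Real.log (a (n + 2)) - Real.log (a (n + 1))) -
        (Real.log (a (n + 1)) - Real.log (a n))| ≤ C / n) :
    ∀ k : ℕ, 2 ≤ k → ¬ LocallyBenfordDistributed a k :=
  not_locallyBenford_of_smooth_general a hreg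
end

section
/- For every integer m ≥ 4, the numbers 2^m - 1 and 2^m have the same leading digit in base 10: D(2^m - 1) = D(2^m). -/
open Filter

/-! Once `x ≥ 10`, an interval `[d·10^k, (d+1)·10^k)` with `d ≤ 9` containing `x` has `k ≥ 1`,
so its endpoints are integers divisible by `10`. An integer `n` not divisible by `10`, such as
`2^m`, is never such an endpoint, hence `n - 1` and `n` lie in the same interval. -/

lemma one_le_of_lt_succ_mul_zpow {x : ℝ} {d : ℕ} {k : ℤ} (hx : 10 ≤ x) (hd : d ≤ 9)
    (h : x < ((d : ℝ) + 1) * 10 ^ k) : 1 ≤ k := by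
  by_contra! hk
  have h10 : (10 : ℝ) ^ k ≤ 1 := zpow_le_one_of_nonpos₀ (by norm_num) (by omega)
  have hd' : (d : ℝ) + 1 ≤ 10 := by norm_cast; omega
  nlinarith [zpow_pos (by norm_num : (0 : ℝ) < 10) k]

lemma hasLeadingDigit_intCast_iff {n : ℤ} {d : ℕ} (hn : 10 ≤ n) (hd : d ≤ 9) :
    HasLeadingDigit n d ↔ ∃ K : ℕ, d * 10 ^ (K + 1) ≤ n ∧ n < (d + 1) * 10 ^ (K + 1) := by
  constructor
  · rintro ⟨k, hlo, hhi⟩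
    obtain ⟨K, rfl⟩ : ∃ K : ℕ, k = K + 1 :=
      ⟨(k - 1).toNat, by have := one_le_of_lt_succ_mul_zpow (by exact_mod_cast hn) hd hhi; omega⟩
    rw [show (K : ℤ) + 1 = ((K + 1 : ℕ) : ℤ) by push_cast; rfl, zpow_natCast] at hlo hhi
    exact ⟨K, by exact_mod_cast hlo, by exact_mod_cast hhi⟩
  · rintro ⟨K, hlo, hhi⟩
    exact ⟨K + 1, by exact_mod_cast hlo, by exact_mod_cast hhi⟩

lemma hasLeadingDigit_intCast_sub_one_iff {n : ℤ} {d : ℕ} (hn : 11 ≤ n) (hn10 : ¬ 10 ∣ n)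
    (hd : d ≤ 9) : HasLeadingDigit ((n : ℝ) - 1) d ↔ HasLeadingDigit n d := by
  rw [← Int.cast_one, ← Int.cast_sub, hasLeadingDigit_intCast_iff (by omega) hd,
    hasLeadingDigit_intCast_iff (by omega) hd]
  have hne (c : ℤ) (K : ℕ) : c * 10 ^ (K + 1) ≠ n := by
    rintro rfl
    exact hn10 (Dvd.dvd.mul_left (dvd_pow_self 10 K.succ_ne_zero) c)
  refine exists_congr fun K => and_congr ?_ ?_
  · rw [Int.le_sub_one_iff, le_iff_lt_or_eq, or_iff_left (hne _ K)]
  · rw [Int.sub_one_lt_iff, le_iff_lt_or_eq, or_iff_left (hne _ K).symm]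

lemma not_ten_dvd_two_pow (m : ℕ) : ¬ (10 : ℤ) ∣ 2 ^ m := by
  intro h
  have h5 : (5 : ℤ) ∣ 2 ^ m := (by norm_num : (5 : ℤ) ∣ 10).trans h
  have := Int.Prime.dvd_pow' (by norm_num : Nat.Prime 5) h5
  norm_num at this

theorem leadingDigit_two_pow_sub_one_general (m : ℕ) (hm : 4 ≤ m) (d : ℕ)
    (hd9 : d ≤ 9) :
    HasLeadingDigit ((2 : ℝ) ^ m - 1) d ↔ HasLeadingDigit ((2 : ℝ) ^ m) d := by
  have h16 : (16 : ℤ) ≤ 2 ^ m := by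
    calc (16 : ℤ) = 2 ^ 4 := by norm_num
      _ ≤ 2 ^ m := pow_le_pow_right₀ (by norm_num) hm
  exact_mod_cast hasLeadingDigit_intCast_sub_one_iff (by omega) (not_ten_dvd_two_pow m) hd9

/-- For `m ≥ 4`, the numbers `2^m - 1` and `2^m` have the same leading digit. -/
theorem leadingDigit_two_pow_sub_one (m : ℕ) (hm : 4 ≤ m) (d : ℕ)
    (hd1 : 1 ≤ d) (hd9 : d ≤ 9) :
    HasLeadingDigit ((2 : ℝ) ^ m - 1) d ↔ HasLeadingDigit ((2 : ℝ) ^ m) d :=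
  leadingDigit_two_pow_sub_one_general m hm d hd9
end

section
/- If a sequence {a_n} of positive real numbers is locally Benford distributed of order k, then it is locally Benford distributed of every order k' with 1 ≤ k' ≤ k. -/
/-! Every positive number has exactly one leading digit in `{1,…,9}`, so the occurrences of a
digit block `d₀ ⋯ d_{m-1}` at position `n` split according to the leading digit `e` of `a (n + m)`.
Summing the order-`m+1` densities over `e` gives `P(d₀)⋯P(d_{m-1}) · ∑ₑ P(e)`, and
`∑ₑ P(e) = log₁₀ ∏ₑ (e+1)/e = log₁₀ 10 = 1`. -/

open Filter

noncomputable def leadingDigit (x : ℝ) : ℕ := ⌊x / 10 ^ Int.log 10 x⌋₊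

lemma one_le_div_zpow_log {x : ℝ} (hx : 0 < x) : 1 ≤ x / 10 ^ Int.log 10 x := by
  have := Int.zpow_log_le_self (b := 10) (by norm_num) hx
  push_cast at this
  rwa [one_le_div (by positivity)]

lemma div_zpow_log_lt_ten (x : ℝ) : x / 10 ^ Int.log 10 x < 10 := by
  have := Int.lt_zpow_succ_log_self (b := 10) (by norm_num) x
  push_cast at this
  rwa [div_lt_iff₀ (by positivity), mul_comm, ← zpow_add_one₀ (by norm_num)]

lemma leadingDigit_mem_Icc {x : ℝ} (hx : 0 < x) : leadingDigit x ∈ Finset.Icc 1 9 := by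
  have h1 := one_le_div_zpow_log hx
  have h10 := div_zpow_log_lt_ten x
  rw [Finset.mem_Icc, leadingDigit, Nat.one_le_floor_iff, ← Nat.lt_succ_iff,
    Nat.floor_lt (by linarith)]
  exact ⟨h1, by exact_mod_cast h10⟩

lemma hasLeadingDigit_leadingDigit {x : ℝ} (hx : 0 < x) : HasLeadingDigit x (leadingDigit x) := by
  have hpow : (0 : ℝ) < 10 ^ Int.log 10 x := by positivity
  have hnonneg := (one_le_div_zpow_log hx).trans' zero_le_one
  refine ⟨Int.log 10 x, ?_, ?_⟩
  · rw [← le_div_iff₀ hpow]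
    exact Nat.floor_le hnonneg
  · rw [← div_lt_iff₀ hpow]
    exact Nat.lt_floor_add_one _

lemma HasLeadingDigit.leadingDigit_eq {x : ℝ} {d : ℕ} (hd : d ∈ Finset.Icc 1 9)
    (h : HasLeadingDigit x d) : leadingDigit x = d := by
  obtain ⟨k, hlo, hhi⟩ := h
  rw [Finset.mem_Icc] at hd
  have hd1 : (1 : ℝ) ≤ d := by exact_mod_cast hd.1
  have hd9 : (d : ℝ) + 1 ≤ 10 := by exact_mod_cast Nat.succ_le_succ hd.2
  have hpow : (0 : ℝ) < 10 ^ k := by positivity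
  have hx : 0 < x := lt_of_lt_of_le (by positivity) hlo
  have hlog : Int.log 10 x = k := by
    apply le_antisymm
    · rw [← Int.lt_add_one_iff, ← Int.lt_zpow_iff_log_lt (by norm_num) hx]
      push_cast
      rw [zpow_add_one₀ (by norm_num)]
      nlinarith
    · rw [← Int.zpow_le_iff_le_log (by norm_num) hx]
      push_cast
      nlinarith
  rw [leadingDigit, hlog, Nat.floor_eq_iff (by positivity), le_div_iff₀ hpow, div_lt_iff₀ hpow]
  exact ⟨hlo, hhi⟩

lemma sum_benfordP : ∑ d ∈ Finset.Icc 1 9, benfordP d = 1 := by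
  simp only [benfordP]
  rw [← Real.logb_prod, ← Real.logb_self_eq_one (b := 10) (by norm_num)]
  · norm_num [Finset.prod_Icc_succ_top]
  · intro d hd
    have : (0 : ℝ) < d := by exact_mod_cast (Finset.mem_Icc.1 hd).1
    positivity

noncomputable def relFreq (P : ℕ → Prop) (N : ℕ) : ℝ :=
  (Nat.card {n : ℕ | 1 ≤ n ∧ n ≤ N ∧ P n} : ℝ) / N

section Partition

variable {ι : Type*} {s : Finset ι} {P : ℕ → Prop} {Q : ι → ℕ → Prop}

lemma card_setOf_eq_sum_of_partition (hPQ : ∀ n, 1 ≤ n → (P n ↔ ∃ e ∈ s, Q e n))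
    (hQ : ∀ n, ∀ e ∈ s, ∀ e' ∈ s, Q e n → Q e' n → e = e') (N : ℕ) :
    Nat.card {n : ℕ | 1 ≤ n ∧ n ≤ N ∧ P n} =
      ∑ e ∈ s, Nat.card {n : ℕ | 1 ≤ n ∧ n ≤ N ∧ Q e n} := by
  classical
  have hfin (R : ℕ → Prop) :
      {n : ℕ | 1 ≤ n ∧ n ≤ N ∧ R n} = ↑((Finset.Icc 1 N).filter R) := by
    ext n
    simp [and_assoc]
  simp only [hfin, Nat.card_coe_set_eq, Set.ncard_coe_finset]
  have hunion :
      (Finset.Icc 1 N).filter P = s.biUnion fun e => (Finset.Icc 1 N).filter (Q e) := by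
    ext n
    simp only [Finset.mem_filter, Finset.mem_biUnion, Finset.mem_Icc]
    constructor
    · rintro ⟨hn, hP⟩
      obtain ⟨e, he, hQe⟩ := (hPQ n hn.1).1 hP
      exact ⟨e, he, hn, hQe⟩
    · rintro ⟨e, he, hn, hQe⟩
      exact ⟨hn, (hPQ n hn.1).2 ⟨e, he, hQe⟩⟩
  rw [hunion, Finset.card_biUnion]
  intro e he e' he' hne
  refine Finset.disjoint_left.2 fun n hn hn' => hne ?_
  exact hQ n e he e' he' (Finset.mem_filter.1 hn).2 (Finset.mem_filter.1 hn').2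

lemma tendsto_relFreq_of_partition (hPQ : ∀ n, 1 ≤ n → (P n ↔ ∃ e ∈ s, Q e n))
    (hQ : ∀ n, ∀ e ∈ s, ∀ e' ∈ s, Q e n → Q e' n → e = e') {c : ι → ℝ}
    (hc : ∀ e ∈ s, Tendsto (relFreq (Q e)) atTop (nhds (c e))) :
    Tendsto (relFreq P) atTop (nhds (∑ e ∈ s, c e)) := by
  have hsum : relFreq P = fun N => ∑ e ∈ s, relFreq (Q e) N := by
    funext N
    rw [relFreq, card_setOf_eq_sum_of_partition hPQ hQ, Nat.cast_sum, Finset.sum_div]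
    rfl
  rw [hsum]
  exact tendsto_finsetSum s hc

end Partition

lemma forall_hasLeadingDigit_snoc {a : ℕ → ℝ} {m n : ℕ} (d : Fin m → ℕ) (e : ℕ) :
    (∀ i : Fin (m + 1), HasLeadingDigit (a (n + i)) ((Fin.snoc d e : Fin (m + 1) → ℕ) i)) ↔
      (∀ i : Fin m, HasLeadingDigit (a (n + i)) (d i)) ∧ HasLeadingDigit (a (n + m)) e := by
  simp [Fin.forall_fin_succ']

lemma LocallyBenfordDistributed.of_succ {a : ℕ → ℝ} (hpos : ∀ n, 1 ≤ n → 0 < a n) {m : ℕ}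
    (h : LocallyBenfordDistributed a (m + 1)) : LocallyBenfordDistributed a m := by
  intro d hd
  have hsnoc : ∀ e ∈ Finset.Icc 1 9, ∀ i,
      1 ≤ (Fin.snoc d e : Fin (m + 1) → ℕ) i ∧ (Fin.snoc d e : Fin (m + 1) → ℕ) i ≤ 9 := by
    intro e he i
    induction i using Fin.lastCases with
    | last => simpa using he
    | cast i => simpa using hd i
  have hlim := tendsto_relFreq_of_partition (s := Finset.Icc 1 9)
    (P := fun n => ∀ i : Fin m, HasLeadingDigit (a (n + i)) (d i))
    (Q := fun e n => ∀ i : Fin (m + 1),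
      HasLeadingDigit (a (n + i)) ((Fin.snoc d e : Fin (m + 1) → ℕ) i))
    (fun n hn => ?_) (fun n e he e' he' hQe hQe' => ?_) (fun e he => h _ (hsnoc e he))
  · simp only [Fin.prod_univ_castSucc, Fin.snoc_castSucc, Fin.snoc_last, ← Finset.mul_sum,
      sum_benfordP, mul_one] at hlim
    exact hlim
  · simp only [forall_hasLeadingDigit_snoc]
    have hx : 0 < a (n + m) := hpos _ (by omega)
    exact ⟨fun hP => ⟨_, leadingDigit_mem_Icc hx, hP, hasLeadingDigit_leadingDigit hx⟩,
      fun ⟨_, _, hP, _⟩ => hP⟩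
  · rw [← ((forall_hasLeadingDigit_snoc d e).1 hQe).2.leadingDigit_eq he,
      ← ((forall_hasLeadingDigit_snoc d e').1 hQe').2.leadingDigit_eq he']

/-- Local Benford distribution of order `k` implies local Benford distribution of any
order `k'` with `1 ≤ k' ≤ k`. -/
theorem locallyBenford_of_le (a : ℕ → ℝ)
    (hpos : ∀ n : ℕ, 1 ≤ n → 0 < a n)
    (k : ℕ) (h : LocallyBenfordDistributed a k) :
    ∀ k' : ℕ, 1 ≤ k' → k' ≤ k → LocallyBenfordDistributed a k' := by
  intro k' _ hle
  induction k, hle using Nat.le_induction with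
  | base => exact h
  | succ k _ ih => exact ih (h.of_succ hpos)
end

section
/- Let {u_n} be a sequence of real numbers satisfying u_n → ∞ as n → ∞ and u_{n+1} = u_n + O(1/n) as n → ∞. For each sufficiently large positive integer k, let n_k denote the smallest integer n with u_n ≥ k + 1/2. Then for every ε > 0 there exists δ > 0 such that, for all sufficiently large k, |u_n - k - 1/2| ≤ ε holds for every n with n_k ≤ n < (1+δ)·n_k. -/
open Filter

/-! Every step of `u` after index `n_k` is at most `C / n_k`. Hence `u` overshoots `k + 1/2` by at
most `C / (n_k - 1)`, which is small because `n_k → ∞` (`u` is bounded on every initial segment),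
and over the next `δ n_k` indices it drifts by at most `δ n_k · C / n_k = δ C`. -/

lemma abs_sub_le_mul_div_of_abs_succ_sub_le {u : ℕ → ℝ} {C : ℝ}
    (hC : ∀ m : ℕ, 1 ≤ m → |u (m + 1) - u m| ≤ C / m) {a n : ℕ} (ha : 1 ≤ a) (han : a ≤ n) :
    |u n - u a| ≤ ((n : ℝ) - a) * C / a := by
  have hC0 : 0 ≤ C := by simpa using (abs_nonneg _).trans (hC 1 le_rfl)
  have hstep : ∀ {k : ℕ}, a ≤ k → k < n → dist (u k) (u (k + 1)) ≤ C / a := fun hak _ => by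
    rw [dist_comm, Real.dist_eq]
    exact (hC _ (ha.trans hak)).trans
      (div_le_div_of_nonneg_left hC0 (by exact_mod_cast ha) (by exact_mod_cast hak))
  calc |u n - u a| = dist (u a) (u n) := by rw [dist_comm, Real.dist_eq]
    _ ≤ ∑ _ ∈ Finset.Ico a n, C / a := dist_le_Ico_sum_of_dist_le han hstep
    _ = ((n : ℝ) - a) * C / a := by
      rw [Finset.sum_const, Nat.card_Ico, nsmul_eq_mul, Nat.cast_sub han]
      ring

lemma exists_nat_forall_le_lt (u : ℕ → ℝ) (N : ℕ) : ∃ K : ℕ, ∀ m ≤ N, u m < K := by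
  obtain ⟨B, hB⟩ := ((Set.finite_le_nat N).image u).bddAbove
  obtain ⟨K, hK⟩ := exists_nat_gt B
  exact ⟨K, fun m hm => (hB ⟨m, hm, rfl⟩).trans_lt hK⟩

theorem near_half_integer_on_interval_general (u : ℕ → ℝ)
    (hreg : ∃ C : ℝ, 0 < C ∧ ∀ n : ℕ, 1 ≤ n → |u (n + 1) - u n| ≤ C / n) :
    ∀ ε : ℝ, 0 < ε → ∃ δ : ℝ, 0 < δ ∧ ∃ K : ℕ, ∀ k : ℕ, K ≤ k →
      ∀ nk : ℕ, ((k : ℝ) + 1 / 2 ≤ u nk ∧ ∀ m : ℕ, m < nk → u m < (k : ℝ) + 1 / 2) →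
        ∀ n : ℕ, nk ≤ n → (n : ℝ) < (1 + δ) * (nk : ℝ) →
          |u n - (k : ℝ) - 1 / 2| ≤ ε := by
  obtain ⟨C, hC0, hC⟩ := hreg
  intro ε hε
  obtain ⟨N, hN⟩ := exists_nat_gt (2 * C / ε)
  obtain ⟨K, hK⟩ := exists_nat_forall_le_lt u N
  refine ⟨ε / (2 * C), by positivity, K, fun k hkK nk ⟨hnk, hmin⟩ n hn hlt => ?_⟩
  have hNnk : N < nk := by
    by_contra! h
    have : (K : ℝ) ≤ k := by exact_mod_cast hkK
    linarith [hK nk h]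
  obtain ⟨m, rfl⟩ : ∃ m, nk = m + 1 := Nat.exists_eq_succ_of_ne_zero (by omega)
  have hNm : (N : ℝ) ≤ m := by exact_mod_cast Nat.lt_succ_iff.mp hNnk
  have hm : (0 : ℝ) < m := (div_pos (by positivity) hε).trans (hN.trans_le hNm)
  have hovershoot : u (m + 1) - u m ≤ ε / 2 := by
    refine (le_abs_self _).trans ((hC m (by exact_mod_cast hm)).trans ?_)
    rw [div_le_iff₀ hm]
    linarith [(div_lt_iff₀ hε).mp (hN.trans_le hNm)]
  have hdrift : |u n - u (m + 1)| ≤ ε / 2 := by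
    refine (abs_sub_le_mul_div_of_abs_succ_sub_le hC le_add_self hn).trans ?_
    push_cast at hlt ⊢
    rw [div_le_iff₀ (by positivity)]
    have := mul_lt_mul_of_pos_right hlt hC0
    field_simp at this ⊢
    linarith
  have := hmin m (by omega)
  rw [abs_le] at hdrift ⊢
  constructor <;> linarith

/-- If `u_n → ∞` and `u_{n+1} = u_n + O(1/n)`, and `n_k` is the least `n` with
`u_n ≥ k + 1/2`, then for every `ε > 0` there is `δ > 0` such that for all large `k`,
`|u_n - k - 1/2| ≤ ε` for all `n` with `n_k ≤ n < (1+δ) n_k`. -/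
theorem near_half_integer_on_interval (u : ℕ → ℝ)
    (hgrow : Tendsto u atTop atTop)
    (hreg : ∃ C : ℝ, 0 < C ∧ ∀ n : ℕ, 1 ≤ n → |u (n + 1) - u n| ≤ C / n) :
    ∀ ε : ℝ, 0 < ε → ∃ δ : ℝ, 0 < δ ∧ ∃ K : ℕ, ∀ k : ℕ, K ≤ k →
      ∀ nk : ℕ, ((k : ℝ) + 1 / 2 ≤ u nk ∧ ∀ m : ℕ, m < nk → u m < (k : ℝ) + 1 / 2) →
        ∀ n : ℕ, nk ≤ n → (n : ℝ) < (1 + δ) * (nk : ℝ) →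
          |u n - (k : ℝ) - 1 / 2| ≤ ε :=
  near_half_integer_on_interval_general u hreg
end

section
/- For the sequence {2^n} (n ≥ 0), the waiting times between consecutive occurrences of leading digit 1 are always 3 or 4: if n < m are such that D(2^n) = D(2^m) = 1 and D(2^j) ≠ 1 for all n < j < m, then m - n ∈ {3, 4}. -/
open Filter

/-!
Doubling moves a number in `[10^k, 2·10^k)` through `[2·10^k, 4·10^k)` and `[4·10^k, 8·10^k)`,
where the leading digit is not `1`, and then `8x ∈ [8·10^k, 16·10^k)`: either `8x ≥ 10^(k+1)`
already has leading digit `1`, or `16x ∈ [16·10^k, 2·10^(k+1))` does.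
-/

theorem hasLeadingDigit_one_iff {x : ℝ} :
    HasLeadingDigit x 1 ↔ ∃ k : ℤ, (10 : ℝ) ^ k ≤ x ∧ x < 2 * 10 ^ k := by
  simp only [HasLeadingDigit, Nat.cast_one, one_mul]
  norm_num

theorem not_hasLeadingDigit_one_of_two_mul_zpow_le {x : ℝ} {k : ℤ} (h₁ : 2 * 10 ^ k ≤ x)
    (h₂ : x < 10 ^ (k + 1)) : ¬ HasLeadingDigit x 1 := by
  rw [hasLeadingDigit_one_iff]
  rintro ⟨j, hj₁, hj₂⟩
  have hj : j < k + 1 := (zpow_lt_zpow_iff_right₀ (by norm_num)).1 (hj₁.trans_lt h₂)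
  have hk : k < j := (zpow_lt_zpow_iff_right₀ (by norm_num)).1 (by linarith : (10 : ℝ) ^ k < 10 ^ j)
  omega

theorem HasLeadingDigit.not_hasLeadingDigit_one_mul {x c : ℝ} (hx : HasLeadingDigit x 1)
    (hc₂ : 2 ≤ c) (hc₅ : c ≤ 5) : ¬ HasLeadingDigit (c * x) 1 := by
  obtain ⟨k, hk₁, hk₂⟩ := hasLeadingDigit_one_iff.1 hx
  have hpos : (0 : ℝ) < 10 ^ k := zpow_pos (by norm_num) k
  refine not_hasLeadingDigit_one_of_two_mul_zpow_le (k := k) ?_ ?_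
  · nlinarith
  · rw [zpow_add_one₀ (by norm_num)]
    nlinarith

theorem HasLeadingDigit.hasLeadingDigit_one_eight_mul_or_sixteen_mul {x : ℝ}
    (hx : HasLeadingDigit x 1) : HasLeadingDigit (8 * x) 1 ∨ HasLeadingDigit (16 * x) 1 := by
  obtain ⟨k, hk₁, hk₂⟩ := hasLeadingDigit_one_iff.1 hx
  have hstep : (10 : ℝ) ^ (k + 1) = 10 * 10 ^ k := by rw [zpow_add_one₀ (by norm_num), mul_comm]
  simp only [hasLeadingDigit_one_iff]
  by_cases h8 : 10 ^ (k + 1) ≤ 8 * x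
  · exact .inl ⟨k + 1, h8, by linarith⟩
  · exact .inr ⟨k + 1, by linarith, by linarith⟩

/-- For the sequence `{2^n}`, waiting times between consecutive occurrences of leading
digit 1 are always 3 or 4. -/
theorem two_pow_leadingDigit_one_gap (n m : ℕ) (hnm : n < m)
    (h1 : HasLeadingDigit ((2 : ℝ) ^ n) 1)
    (h2 : HasLeadingDigit ((2 : ℝ) ^ m) 1)
    (hbetween : ∀ j : ℕ, n < j → j < m → ¬ HasLeadingDigit ((2 : ℝ) ^ j) 1) :
    m - n = 3 ∨ m - n = 4 := by
  have hshift : ∀ j : ℕ, (2 : ℝ) ^ (n + j) = 2 ^ j * 2 ^ n := fun j => by rw [pow_add, mul_comm]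
  have hm₃ : n + 3 ≤ m := by
    by_contra! hm
    obtain rfl | rfl : m = n + 1 ∨ m = n + 2 := by omega
    · exact h1.not_hasLeadingDigit_one_mul (c := 2 ^ 1) (by norm_num) (by norm_num)
        (hshift 1 ▸ h2)
    · exact h1.not_hasLeadingDigit_one_mul (c := 2 ^ 2) (by norm_num) (by norm_num)
        (hshift 2 ▸ h2)
  have hm₄ : m ≤ n + 4 := by
    by_contra! hm
    rcases h1.hasLeadingDigit_one_eight_mul_or_sixteen_mul with h | h
    · exact hbetween (n + 3) (by omega) (by omega) (by rw [hshift]; norm_num [h])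
    · exact hbetween (n + 4) (by omega) (by omega) (by rw [hshift]; norm_num [h])
  omega
end
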